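/- arXiv:math/0505645 — 3 statements merged into one kernel-verified Lean document; each statement's English description precedes it below -/
import Mathlib

section
/- Suppose y ≪ z are functions from ω to the positive integers, and for each n ∈ ω, T_n ⊆ ω^{<ω} is a y-sized tree. Then there exists a z-sized tree T* and a strictly increasing sequence of integers ⟨k_n : n ∈ ω⟩ with n < k_n for all n, such that for every f ∈ ω^ω: f ∈ [T*] if and only if for every n ∈ ω there exists i ≤ n with f↾k_n ∈ T_{k_i}. -/
open Filter

/-- The initial segment of `f` of length `n`, as a finite sequence. -/
def seg (f : ℕ → ℕ) (n : ℕ) : List ℕ := (List.range n).map f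

/-- A tree on `ω`: a downward-closed set of finite sequences (with the
convention `η↾m = η.take m = η` when `m ≥ length η`). -/
def IsTree (T : Set (List ℕ)) : Prop := ∀ η ∈ T, ∀ m, η.take m ∈ T

/-- `T` is `x`-sized: the `n`-th level of `T` is finite of size at most `x n`. -/
def Sized (x : ℕ → ℕ) (T : Set (List ℕ)) : Prop :=
  ∀ n, {η ∈ T | η.length = n}.Finite ∧ Set.ncard {η ∈ T | η.length = n} ≤ x n

/-- `f` is an infinite branch of `T` (i.e. `f ∈ [T]`). -/
def Branch (T : Set (List ℕ)) (f : ℕ → ℕ) : Prop := ∀ n, seg f n ∈ T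

/-- `x ≪ y`: pointwise `x n ≤ y n` and `y n / x n → ∞`. -/
def LL (x y : ℕ → ℕ) : Prop :=
  (∀ n, x n ≤ y n) ∧ Tendsto (fun n => (y n : ℝ) / (x n : ℝ)) atTop atTop

lemma seg_take (f : ℕ → ℕ) (a b : ℕ) : (seg f a).take b = seg f (min b a) := by
  rw [seg, seg, ← List.map_take, List.take_range]

lemma seg_length (f : ℕ → ℕ) (a : ℕ) : (seg f a).length = a := by simp [seg]

lemma union_card (A : ℕ → Set (List ℕ)) (B : ℕ)
    (hfin : ∀ i, (A i).Finite) (hcard : ∀ i, (A i).ncard ≤ B) (N : ℕ) :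
    {x | ∃ i ≤ N, x ∈ A i}.Finite ∧ {x | ∃ i ≤ N, x ∈ A i}.ncard ≤ (N + 1) * B := by
  induction N with
  | zero =>
    have h0 : {x | ∃ i ≤ 0, x ∈ A i} = A 0 := by ext x; simp
    rw [h0]
    exact ⟨hfin 0, by simpa using hcard 0⟩
  | succ N ih =>
    have he : {x | ∃ i ≤ N + 1, x ∈ A i} = {x | ∃ i ≤ N, x ∈ A i} ∪ A (N + 1) := by
      ext x
      constructor
      · rintro ⟨i, hi, hx⟩
        rcases Nat.lt_or_ge i (N + 1) with h | h
        · exact Or.inl ⟨i, by omega, hx⟩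
        · have : i = N + 1 := by omega
          subst this
          exact Or.inr hx
      · rintro (⟨i, hi, hx⟩ | hx)
        · exact ⟨i, by omega, hx⟩
        · exact ⟨N + 1, le_refl _, hx⟩
    rw [he]
    refine ⟨ih.1.union (hfin _), ?_⟩
    calc ({x | ∃ i ≤ N, x ∈ A i} ∪ A (N + 1)).ncard
        ≤ {x | ∃ i ≤ N, x ∈ A i}.ncard + (A (N + 1)).ncard :=
          Set.ncard_union_le _ _
      _ ≤ (N + 1) * B + B := Nat.add_le_add ih.2 (hcard _)
      _ = (N + 1 + 1) * B := by ring

/-- Auxiliary fast-growing sequence. -/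
def kfun (M : ℕ → ℕ) : ℕ → ℕ
  | 0 => max (M 2) 1
  | n + 1 => max (M (n + 3)) (max (kfun M n + 1) (n + 2))

lemma kfun_lt_succ (M : ℕ → ℕ) (n : ℕ) : kfun M n < kfun M (n + 1) := by
  have : kfun M n + 1 ≤ kfun M (n + 1) := le_trans (le_max_left _ _) (le_max_right _ _)
  omega

lemma lt_kfun (M : ℕ → ℕ) (n : ℕ) : n < kfun M n := by
  cases n with
  | zero => have : 1 ≤ kfun M 0 := le_max_right _ _; omega
  | succ n =>
    have : n + 2 ≤ kfun M (n + 1) := le_trans (le_max_right _ _) (le_max_right _ _)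
    omega

lemma M_le_kfun (M : ℕ → ℕ) (n : ℕ) : M (n + 2) ≤ kfun M n := by
  cases n with
  | zero => exact le_max_left _ _
  | succ n => exact le_max_left _ _

theorem stmt3 (y z : ℕ → ℕ) (hy : ∀ n, 0 < y n) (hz : ∀ n, 0 < z n)
    (hyz : LL y z) (T : ℕ → Set (List ℕ))
    (hT : ∀ n, IsTree (T n)) (hTy : ∀ n, Sized y (T n)) :
    ∃ (Tstar : Set (List ℕ)) (k : ℕ → ℕ),
      IsTree Tstar ∧ Sized z Tstar ∧ StrictMono k ∧ (∀ n, n < k n) ∧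
      ∀ f : ℕ → ℕ, Branch Tstar f ↔ ∀ n, ∃ i ≤ n, seg f (k n) ∈ T (k i) := by
  -- choose thresholds from the divergence of z/y
  have hM : ∀ c : ℕ, ∃ M : ℕ, ∀ m, M ≤ m → c * y m ≤ z m := by
    intro c
    have hev := hyz.2.eventually_ge_atTop (c : ℝ)
    rw [eventually_atTop] at hev
    obtain ⟨M, hMp⟩ := hev
    refine ⟨M, fun m hm => ?_⟩
    have h := hMp m hm
    have hy' : (0 : ℝ) < y m := by exact_mod_cast hy m
    have hc : (c : ℝ) * y m ≤ z m := by
      rw [le_div_iff₀ hy'] at h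
      linarith
    exact_mod_cast hc
  choose M hMspec using hM
  set k : ℕ → ℕ := kfun M with hkdef
  have hkmono : StrictMono k := strictMono_nat_of_lt_succ (kfun_lt_succ M)
  have hklt : ∀ n, n < k n := lt_kfun M
  have hex : ∀ m, ∃ n, m ≤ k n := fun m => ⟨m, (hklt m).le⟩
  set c : ℕ → ℕ := fun m => Nat.find (hex m) with hcdef
  have hcspec : ∀ m, m ≤ k (c m) := fun m => Nat.find_spec (hex m)
  have hcmin : ∀ m n, m ≤ k n → c m ≤ n := fun m n h => Nat.find_min' (hex m) h
  -- key size bound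
  have hkey : ∀ m, (c m + 1) * y m ≤ z m := by
    intro m
    rcases Nat.eq_zero_or_pos (c m) with h0 | hpos
    · rw [h0]
      simpa using hyz.1 m
    · obtain ⟨n, hn⟩ : ∃ n, c m = n + 1 := ⟨c m - 1, by omega⟩
      have hnlt : n < c m := by omega
      rw [hcdef] at hnlt
      simp only at hnlt
      have hnot : ¬ m ≤ k n := Nat.find_min (hex m) hnlt
      have hkn : k n < m := by omega
      have hMk : M (n + 2) ≤ k n := M_le_kfun M n
      have := hMspec (n + 2) m (by omega)
      rw [hn]
      exact this
  -- the tree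
  set Tstar : Set (List ℕ) :=
    {η | ∀ m ≤ η.length, ∃ i ≤ c m, η.take m ∈ T (k i)} with hTsdef
  refine ⟨Tstar, k, ?_, ?_, hkmono, hklt, ?_⟩
  · -- IsTree
    intro η hη m' m hm
    have hlen : m ≤ m' ∧ m ≤ η.length := by
      rw [List.length_take] at hm
      omega
    obtain ⟨i, hi, hmem⟩ := hη m hlen.2
    refine ⟨i, hi, ?_⟩
    rw [List.take_take, min_eq_left hlen.1]
    exact hmem
  · -- Sized
    intro m
    have hsub : {η ∈ Tstar | η.length = m} ⊆
        {x | ∃ i ≤ c m, x ∈ {η ∈ T (k i) | η.length = m}} := by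
      rintro η ⟨hη, hlen⟩
      obtain ⟨i, hi, hmem⟩ := hη m (by rw [hlen])
      rw [← hlen, List.take_length] at hmem
      exact ⟨i, hi, hmem, hlen⟩
    have huc := union_card (fun i => {η ∈ T (k i) | η.length = m}) (y m)
      (fun i => ((hTy (k i)) m).1) (fun i => ((hTy (k i)) m).2) (c m)
    refine ⟨huc.1.subset hsub, ?_⟩
    calc {η ∈ Tstar | η.length = m}.ncard
        ≤ _ := Set.ncard_le_ncard hsub huc.1
      _ ≤ (c m + 1) * y m := huc.2
      _ ≤ z m := hkey m
  · -- branch characterization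
    intro f
    constructor
    · intro hb n
      have hη := hb (k n)
      obtain ⟨i, hi, hmem⟩ := hη (k n) (by rw [seg_length])
      rw [seg_take, min_self] at hmem
      exact ⟨i, hi.trans (hcmin (k n) n le_rfl), hmem⟩
    · intro h N m hm
      obtain ⟨i, hi, hmem⟩ := h (c m)
      refine ⟨i, hi, ?_⟩
      rw [seg_length] at hm
      rw [seg_take, min_eq_left hm]
      have := hT (k i) _ hmem m
      rw [seg_take, min_eq_left (hcspec m)] at this
      exact this
end

section
/- With notation as in the tree-amalgamation lemma: define k_n recursively so that k_n > n and for all t ≥ k_n, (n+2)·y(t) ≤ z(t) (possible since y ≪ z), and let T* = {η ∈ ω^{<ω} : ∀n ∃i ≤ n, η↾k_n ∈ T_{k_i}}. Then T* is a z-sized tree, i.e., for every t, |T* ∩ ω^t| ≤ z(t). -/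
open Filter

lemma aux_union (N c : ℕ) (S : ℕ → Set (List ℕ)) (hf : ∀ i, (S i).Finite)
    (hc : ∀ i, (S i).ncard ≤ c) :
    (⋃ i ∈ Finset.range N, S i).Finite ∧ (⋃ i ∈ Finset.range N, S i).ncard ≤ N * c := by
  have hset : (⋃ i ∈ Finset.range N, S i)
      = ((Finset.range N).biUnion (fun i => (hf i).toFinset) : Finset (List ℕ)) := by
    ext η; simp
  constructor
  · rw [hset]; exact (Finset.finite_toSet _)
  · rw [hset, Set.ncard_coe_finset]
    calc ((Finset.range N).biUnion (fun i => (hf i).toFinset)).card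
        ≤ ∑ i ∈ Finset.range N, ((hf i).toFinset).card := Finset.card_biUnion_le
      _ ≤ ∑ _i ∈ Finset.range N, c := by
          apply Finset.sum_le_sum
          intro i _
          rw [← Set.ncard_eq_toFinset_card _ (hf i)]
          exact hc i
      _ = N * c := by simp [Nat.mul_comm]

theorem stmt4 (y z : ℕ → ℕ) (hy : ∀ n, 0 < y n) (hz : ∀ n, 0 < z n)
    (hyz : LL y z) (T : ℕ → Set (List ℕ))
    (hT : ∀ n, IsTree (T n)) (hTy : ∀ n, Sized y (T n))
    (k : ℕ → ℕ) (hk : StrictMono k) (hkn : ∀ n, n < k n)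
    (hkyz : ∀ n, ∀ t ≥ k n, (n + 2) * y t ≤ z t) :
    IsTree {η : List ℕ | ∀ n, ∃ i ≤ n, η.take (k n) ∈ T (k i)} ∧
    Sized z {η : List ℕ | ∀ n, ∃ i ≤ n, η.take (k n) ∈ T (k i)} := by
  constructor
  · -- tree
    intro η hη m n
    obtain ⟨i, hi, hmem⟩ := hη n
    refine ⟨i, hi, ?_⟩
    have : (η.take m).take (k n) = (η.take (k n)).take m := by
      rw [List.take_take, List.take_take, Nat.min_comm]
    rw [this]
    exact hT (k i) _ hmem m
  · -- sized
    intro t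
    obtain ⟨N, htN, hNc⟩ : ∃ N, t < k N ∧ (N + 1) * y t ≤ z t := by
      by_cases h0 : t < k 0
      · exact ⟨0, h0, by simpa using hyz.1 t⟩
      · push_neg at h0
        -- greatest n with k n ≤ t
        have hex : ∃ m, t < k m := ⟨t + 1, lt_of_le_of_lt (Nat.le_succ t) (hkn (t+1))⟩
        classical
        have hM : t < k (Nat.find hex) := Nat.find_spec hex
        have hMpos : 0 < Nat.find hex := by
          rcases Nat.eq_zero_or_pos (Nat.find hex) with h | h
          · rw [h] at hM; omega
          · exact h
        have hkn_le : k (Nat.find hex - 1) ≤ t := by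
          have := Nat.find_min hex (m := Nat.find hex - 1) (by omega)
          omega
        have h2 := hkyz (Nat.find hex - 1) t hkn_le
        have he : Nat.find hex - 1 + 2 = Nat.find hex + 1 := by omega
        rw [he] at h2
        exact ⟨Nat.find hex, hM, h2⟩
    have hsub : {η ∈ {η : List ℕ | ∀ n, ∃ i ≤ n, η.take (k n) ∈ T (k i)} | η.length = t}
        ⊆ ⋃ i ∈ Finset.range (N + 1), {η ∈ T (k i) | η.length = t} := by
      rintro η ⟨hη, hlen⟩
      obtain ⟨i, hi, hmem⟩ := hη N
      have : η.take (k N) = η := List.take_of_length_le (by omega)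
      rw [this] at hmem
      simp only [Set.mem_iUnion]
      exact ⟨i, by simp [Finset.mem_range]; omega, hmem, hlen⟩
    have haux := aux_union (N + 1) (y t) (fun i => {η ∈ T (k i) | η.length = t})
      (fun i => (hTy (k i) t).1) (fun i => (hTy (k i) t).2)
    refine ⟨haux.1.subset hsub, ?_⟩
    calc Set.ncard _ ≤ _ := Set.ncard_le_ncard hsub haux.1
      _ ≤ (N + 1) * y t := haux.2
      _ ≤ z t := hNc
end

section
/- Suppose y ≪ z are positive-valued functions on ω, and for every n ∈ ω, T_n is a y-sized tree with an infinite branch h_n ∈ [T_n]. Suppose f ∈ ω^ω satisfies: for all k, f↾k is an initial segment of h_k. Then there exists a z-sized tree T* and a sequence of integers ⟨m_i : i ∈ ω⟩ such that for every η ∈ ω^{<ω}: if η is an initial segment of f, i ∈ ω, length(η) ≥ m_i, and ν ∈ ω^{<ω} extends η with ν ∈ T_{m_i}, then ν ∈ T*. -/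
open Filter

/-! Since `z n / y n → ∞`, we can pick `m` strictly increasing with `(i + 1) * y n + 1 ≤ z n`
whenever `m i ≤ n`. Take `T*` to be the union over `i` of the nodes of `T (m i)` that agree with `f`
below `m i`. A node of `T*` of length `n` is either `f ↾ n` or a node of level `n` of some `T (m i)`
with `m i < n`; if there are `k` such `i` then `m (k - 1) < n`, so level `n` of `T*` has at most
`k * y n + 1 ≤ z n` nodes. -/

lemma take_seg (f : ℕ → ℕ) (n m : ℕ) : (seg f n).take m = seg f (min m n) := by
  simp [seg, ← List.map_take, List.take_range]

lemma IsTree.iUnion {ι : Type*} {T : ι → Set (List ℕ)} (hT : ∀ i, IsTree (T i)) :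
    IsTree (⋃ i, T i) := by
  simp only [IsTree, Set.mem_iUnion]
  rintro η ⟨i, hη⟩ m
  exact ⟨i, hT i η hη m⟩

/-- The nodes of `T` that agree with `f` on their first `min k ν.length` entries. -/
def prunedAlong (f : ℕ → ℕ) (k : ℕ) (T : Set (List ℕ)) : Set (List ℕ) :=
  {ν ∈ T | ν.take k <+: seg f k}

section prunedAlong

variable {f : ℕ → ℕ} {k : ℕ} {T : Set (List ℕ)}

lemma IsTree.prunedAlong (hT : IsTree T) : IsTree (prunedAlong f k T) := by
  rintro ν ⟨hν, hνf⟩ m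
  refine ⟨hT ν hν m, ?_⟩
  rw [List.take_take, min_comm, ← List.take_take]
  exact (List.take_prefix _ _).trans hνf

lemma eq_seg_of_mem_prunedAlong {ν : List ℕ} (hν : ν ∈ prunedAlong f k T)
    (hk : ν.length ≤ k) : ν = seg f ν.length := by
  have hνf := hν.2
  rw [List.take_of_length_le hk, List.prefix_iff_eq_take, take_seg, min_eq_left hk] at hνf
  exact hνf

lemma mem_prunedAlong_of_prefix {η ν : List ℕ} (hη : η = seg f η.length) (hk : k ≤ η.length)
    (hην : η <+: ν) (hν : ν ∈ T) : ν ∈ prunedAlong f k T := by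
  obtain ⟨t, rfl⟩ := hην
  refine ⟨hν, ?_⟩
  rw [List.take_append_of_le_length hk, hη, take_seg, min_eq_left hk]

end prunedAlong

lemma LL.eventually_mul_add_one_le {y z : ℕ → ℕ} (hyz : LL y z) (c : ℕ) :
    ∀ᶠ n in atTop, c * y n + 1 ≤ z n := by
  filter_upwards [hyz.2.eventually_ge_atTop ((c : ℝ) + 1)] with n hn
  have hy : 0 < (y n : ℝ) := by
    by_contra! h0
    rw [le_antisymm h0 (Nat.cast_nonneg _), div_zero] at hn
    linarith
  rw [le_div_iff₀ hy] at hn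
  have : (c + 1) * y n ≤ z n := by exact_mod_cast hn
  have : 1 ≤ y n := by exact_mod_cast hy
  nlinarith

lemma exists_strictMono_forall_le_of_eventually {P : ℕ → ℕ → Prop}
    (hP : ∀ i, ∀ᶠ n in atTop, P i n) : ∃ m : ℕ → ℕ, StrictMono m ∧ ∀ i n, m i ≤ n → P i n :=
  extraction_forall_of_eventually fun i => eventually_forall_ge_atTop.2 (hP i)

lemma StrictMono.exists_forall_lt_iff_lt {m : ℕ → ℕ} (hm : StrictMono m) (n : ℕ) :
    ∃ k, ∀ i, m i < n ↔ i < k := by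
  have hex : ∃ i, n ≤ m i := ⟨n, hm.id_le n⟩
  refine ⟨Nat.find hex, fun i => ⟨fun hi => ?_, fun hi => not_le.1 (Nat.find_min hex hi)⟩⟩
  by_contra! hki
  exact (Nat.find_spec hex).not_gt ((hm.monotone hki).trans_lt hi)

lemma finite_and_ncard_le_of_subset_insert_biUnion {α ι : Type*} {s : Set α} {a : α}
    {I : Finset ι} {t : ι → Set α} {c : ℕ} (hs : s ⊆ insert a (⋃ i ∈ I, t i))
    (ht : ∀ i ∈ I, (t i).Finite ∧ (t i).ncard ≤ c) : s.Finite ∧ s.ncard ≤ I.card * c + 1 := by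
  have hfin : (insert a (⋃ i ∈ I, t i)).Finite :=
    (I.finite_toSet.biUnion fun i hi => (ht i hi).1).insert a
  refine ⟨hfin.subset hs, ?_⟩
  calc s.ncard ≤ (insert a (⋃ i ∈ I, t i)).ncard := Set.ncard_le_ncard hs hfin
    _ ≤ (⋃ i ∈ I, t i).ncard + 1 := Set.ncard_insert_le _ _
    _ ≤ (∑ i ∈ I, (t i).ncard) + 1 := by grw [I.set_ncard_biUnion_le]
    _ ≤ I.card * c + 1 := by
      grw [Finset.sum_le_card_nsmul I _ c fun i hi => (ht i hi).2, smul_eq_mul]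

theorem stmt5_general (y z : ℕ → ℕ) (hz : ∀ n, 0 < z n)
    (hyz : LL y z) (T : ℕ → Set (List ℕ))
    (hT : ∀ n, IsTree (T n)) (hTy : ∀ n, Sized y (T n))
    (f : ℕ → ℕ) :
    ∃ (Tstar : Set (List ℕ)) (m : ℕ → ℕ),
      IsTree Tstar ∧ Sized z Tstar ∧
      ∀ η : List ℕ, η = seg f η.length →
        ∀ i, m i ≤ η.length →
          ∀ ν : List ℕ, η <+: ν → ν ∈ T (m i) → ν ∈ Tstar := by
  obtain ⟨m, hm, hmz⟩ := exists_strictMono_forall_le_of_eventually fun i =>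
    hyz.eventually_mul_add_one_le (i + 1)
  refine ⟨⋃ i, prunedAlong f (m i) (T (m i)), m, IsTree.iUnion fun i => (hT _).prunedAlong,
    fun n => ?_, fun η hη i hi ν hην hν =>
      Set.mem_iUnion.2 ⟨i, mem_prunedAlong_of_prefix hη hi hην hν⟩⟩
  obtain ⟨k, hk⟩ := hm.exists_forall_lt_iff_lt n
  have hsub : {ν ∈ ⋃ i, prunedAlong f (m i) (T (m i)) | ν.length = n} ⊆
      insert (seg f n) (⋃ i ∈ Finset.range k, {ν ∈ T (m i) | ν.length = n}) := by
    rintro ν ⟨hν, rfl⟩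
    obtain ⟨i, hνi⟩ := Set.mem_iUnion.1 hν
    rcases lt_or_ge (m i) ν.length with hi | hi
    · exact Or.inr (Set.mem_biUnion (Finset.mem_range.2 ((hk i).1 hi)) ⟨hνi.1, rfl⟩)
    · exact Or.inl (eq_seg_of_mem_prunedAlong hνi hi)
  obtain ⟨hfin, hcard⟩ := finite_and_ncard_le_of_subset_insert_biUnion hsub fun i _ => hTy (m i) n
  refine ⟨hfin, hcard.trans ?_⟩
  rw [Finset.card_range]
  cases k with
  | zero => rw [zero_mul]; exact hz n
  | succ k => exact hmz k n ((hk k).2 k.lt_succ_self).le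

theorem stmt5 (y z : ℕ → ℕ) (hy : ∀ n, 0 < y n) (hz : ∀ n, 0 < z n)
    (hyz : LL y z) (T : ℕ → Set (List ℕ))
    (hT : ∀ n, IsTree (T n)) (hTy : ∀ n, Sized y (T n))
    (h : ℕ → ℕ → ℕ) (hh : ∀ n, Branch (T n) (h n))
    (f : ℕ → ℕ) (hf : ∀ k, seg f k = seg (h k) k) :
    ∃ (Tstar : Set (List ℕ)) (m : ℕ → ℕ),
      IsTree Tstar ∧ Sized z Tstar ∧
      ∀ η : List ℕ, η = seg f η.length →
        ∀ i, m i ≤ η.length →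
          ∀ ν : List ℕ, η <+: ν → ν ∈ T (m i) → ν ∈ Tstar :=
  stmt5_general y z hz hyz T hT hTy f
end
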